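/- Let (Ωᵢ, Pᵢ) be probability spaces and Nᵢ : Ωᵢ → ℕ random variables. If for every r ∈ ℕ the r-th factorial moments E[(Nᵢ)ᵣ] converge to λ^r as i → ∞, where λ > 0, then for every n ∈ ℕ, Pᵢ(Nᵢ = n) → λ^n e^{-λ}/n! as i → ∞. -/

import Mathlib

/-!
Writing `(N)ₖ / (n! k!) = C(N, n) C(N - n, k)`, the truncated inclusion–exclusion sums
`∑_{k<M} (-1)ᵏ (N)_{n+k} / (n! k!)` approximate the indicator of `N = n` with error at most the
first omitted term `(N)_{n+M} / (n! M!)` (Bonferroni inequalities). Taking expectations, letting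
`i → ∞` with `M` fixed and then `M → ∞`, the sums become the exponential series of
`λⁿ e^{-λ} / n!` and the error `λ^{n+M} / (n! M!)` tends to `0`.
-/

open MeasureTheory Real Filter Finset Nat Topology

theorem abs_sum_range_neg_one_pow_mul_choose_sub_le (m M : ℕ) :
    |∑ k ∈ range M, (-1) ^ k * (m.choose k : ℤ) - if m = 0 then 1 else 0| ≤ m.choose M := by
  rcases M with _ | M
  · split_ifs <;> simp
  rcases m with _ | m
  · simp [sum_range_succ']
  rw [Int.alternating_sum_range_choose_eq_choose, if_neg m.succ_ne_zero, sub_zero, abs_mul,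
    abs_pow, abs_neg, abs_one, one_pow, one_mul, Nat.abs_cast, choose_succ_succ]
  push_cast
  linarith [(m.choose (M + 1)).cast_nonneg (α := ℤ)]

theorem descFactorial_add_div_factorial_mul_factorial (x n k : ℕ) :
    (x.descFactorial (n + k) : ℝ) / (n ! * k !) = x.choose n * (x - n).choose k := by
  rw [← Nat.descFactorial_mul_descFactorial (Nat.le_add_right n k), Nat.add_sub_cancel_left,
    descFactorial_eq_factorial_mul_choose, descFactorial_eq_factorial_mul_choose]
  push_cast
  field_simp

theorem abs_ite_eq_sub_sum_descFactorial_le (x n M : ℕ) :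
    |(if x = n then 1 else 0) -
        ∑ k ∈ range M, (-1) ^ k * ((x.descFactorial (n + k) : ℝ) / (n ! * k !))|
      ≤ (x.descFactorial (n + M) : ℝ) / (n ! * M !) := by
  have hite : (if x = n then (1 : ℤ) else 0) = x.choose n * if x - n = 0 then 1 else 0 := by
    rcases lt_or_ge x n with h | h
    · simp [h.ne, choose_eq_zero_of_lt h]
    · by_cases hx : x = n
      · simp [hx]
      · simp [hx, show x - n ≠ 0 by omega]
  have key : |(if x = n then (1 : ℤ) else 0) -
      ∑ k ∈ range M, (-1) ^ k * (x.choose n * (x - n).choose k : ℤ)|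
      ≤ x.choose n * (x - n).choose M := by
    simp_rw [hite, mul_left_comm _ (x.choose n : ℤ), ← mul_sum, ← mul_sub, abs_mul, Nat.abs_cast,
      abs_sub_comm (if x - n = 0 then (1 : ℤ) else 0)]
    exact mul_le_mul_of_nonneg_left (abs_sum_range_neg_one_pow_mul_choose_sub_le _ _)
      (by positivity)
  simp only [descFactorial_add_div_factorial_mul_factorial]
  exact_mod_cast key

theorem abs_measureReal_eq_sub_sum_integral_descFactorial_le {Ω : Type*} [MeasurableSpace Ω]
    {μ : Measure Ω} [IsFiniteMeasure μ] {X : Ω → ℕ} (hX : Measurable X) (n M : ℕ)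
    (hint : ∀ k ≤ M, Integrable (fun ω ↦ ((X ω).descFactorial (n + k) : ℝ)) μ) :
    |μ.real {ω | X ω = n} -
        ∑ k ∈ range M, (-1) ^ k * ((∫ ω, ((X ω).descFactorial (n + k) : ℝ) ∂μ) / (n ! * k !))|
      ≤ (∫ ω, ((X ω).descFactorial (n + M) : ℝ) ∂μ) / (n ! * M !) := by
  have hset : MeasurableSet {ω | X ω = n} := hX (measurableSet_singleton n)
  have hterm : ∀ k ∈ range M, Integrable
      (fun ω ↦ (-1) ^ k * (((X ω).descFactorial (n + k) : ℝ) / (n ! * k !))) μ :=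
    fun k hk ↦ ((hint k (mem_range.1 hk).le).div_const _).const_mul _
  have hsum : ∑ k ∈ range M, (-1) ^ k * ((∫ ω, ((X ω).descFactorial (n + k) : ℝ) ∂μ) / (n ! * k !))
      = ∫ ω, ∑ k ∈ range M, (-1) ^ k * (((X ω).descFactorial (n + k) : ℝ) / (n ! * k !)) ∂μ := by
    rw [integral_finsetSum _ hterm]
    simp only [integral_const_mul, integral_div]
  have hind : Integrable ({ω | X ω = n}.indicator (1 : Ω → ℝ)) μ :=
    (integrable_const 1).indicator hset
  rw [hsum, ← integral_indicator_one hset, ← integral_sub hind (integrable_finsetSum _ hterm),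
    ← integral_div]
  refine (abs_integral_le_integral_abs).trans (integral_mono_of_nonneg
    (Eventually.of_forall fun _ ↦ abs_nonneg _) ((hint M le_rfl).div_const _)
    (Eventually.of_forall fun ω ↦ ?_))
  simpa [Set.indicator_apply] using abs_ite_eq_sub_sum_descFactorial_le (X ω) n M

theorem eventually_integrable_of_tendsto_integral {ι : Type*} {l : Filter ι} {Ω : ι → Type*}
    [∀ i, MeasurableSpace (Ω i)] {μ : ∀ i, Measure (Ω i)} {f : ∀ i, Ω i → ℝ} {c : ℝ}
    (hc : c ≠ 0) (h : Tendsto (fun i ↦ ∫ ω, f i ω ∂μ i) l (𝓝 c)) :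
    ∀ᶠ i in l, Integrable (f i) (μ i) :=
  (h.eventually_ne hc).mono fun _ hi ↦ by_contra fun hf ↦ hi (integral_undef hf)

theorem tendsto_sum_range_neg_one_pow_mul_pow_add_div (lam : ℝ) (n : ℕ) :
    Tendsto (fun M ↦ ∑ k ∈ range M, (-1) ^ k * (lam ^ (n + k) / (n ! * k !))) atTop
      (𝓝 (lam ^ n * exp (-lam) / n !)) := by
  have hexp : HasSum (fun k ↦ (-lam) ^ k / k !) (exp (-lam)) := by
    rw [exp_eq_exp_ℝ]
    exact NormedSpace.expSeries_div_hasSum_exp (-lam)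
  convert hexp.tendsto_sum_nat.const_mul (lam ^ n / n !) using 1
  · ext M
    rw [mul_sum]
    refine sum_congr rfl fun k _ ↦ ?_
    rw [neg_pow, pow_add]
    ring
  · ring_nf

theorem tendsto_pow_add_div_factorial_mul_factorial (lam : ℝ) (n : ℕ) :
    Tendsto (fun M ↦ lam ^ (n + M) / (n ! * M !)) atTop (𝓝 0) := by
  convert (FloorSemiring.tendsto_pow_div_factorial_atTop lam).const_mul (lam ^ n / n !) using 1
  · ext M
    rw [pow_add]
    ring
  · rw [mul_zero]

theorem tendsto_of_forall_eventually_abs_sub_le {ι κ : Type*} {l : Filter ι} {m : Filter κ}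
    [m.NeBot] {a : ι → ℝ} {L : ℝ} {b c : κ → ι → ℝ} {S R : κ → ℝ}
    (hab : ∀ M, ∀ᶠ i in l, |a i - b M i| ≤ c M i) (hb : ∀ M, Tendsto (b M) l (𝓝 (S M)))
    (hc : ∀ M, Tendsto (c M) l (𝓝 (R M))) (hS : Tendsto S m (𝓝 L)) (hR : Tendsto R m (𝓝 0)) :
    Tendsto a l (𝓝 L) := by
  rw [Metric.tendsto_nhds]
  intro ε hε
  have hε4 : 0 < ε / 4 := by positivity
  obtain ⟨M, hSM, hRM⟩ :=
    ((Metric.tendsto_nhds.1 hS _ hε4).and (Metric.tendsto_nhds.1 hR _ hε4)).exists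
  filter_upwards [hab M, Metric.tendsto_nhds.1 (hb M) _ hε4, Metric.tendsto_nhds.1 (hc M) _ hε4]
    with i habi hbi hci
  simp only [Real.dist_eq, sub_zero, abs_lt] at hSM hRM hbi hci ⊢
  rw [abs_le] at habi
  constructor <;> linarith

/-- One-dimensional method of moments for Poisson convergence. -/
theorem method_of_moments_one_dim
    {Ω : ℕ → Type*} [∀ i, MeasurableSpace (Ω i)]
    (P : ∀ i, Measure (Ω i)) [∀ i, IsProbabilityMeasure (P i)]
    (N : ∀ i, Ω i → ℕ) (hN : ∀ i, Measurable (N i))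
    (lam : ℝ) (hlam : 0 < lam)
    (hmom : ∀ r : ℕ,
      Tendsto (fun i => ∫ ω, (Nat.descFactorial (N i ω) r : ℝ) ∂(P i))
        atTop (nhds (lam ^ r))) :
    ∀ n : ℕ,
      Tendsto (fun i => ((P i) {ω | N i ω = n}).toReal) atTop
        (nhds (lam ^ n * Real.exp (-lam) / Nat.factorial n)) := by
  intro n
  refine tendsto_of_forall_eventually_abs_sub_le (m := atTop)
    (fun M ↦ ?_) (fun M ↦ tendsto_finsetSum _ fun k _ ↦ ((hmom _).div_const _).const_mul _)
    (fun M ↦ (hmom _).div_const _) (tendsto_sum_range_neg_one_pow_mul_pow_add_div lam n)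
    (tendsto_pow_add_div_factorial_mul_factorial lam n)
  -- The integral of a non-integrable function is `0`, so the limit `λ ^ r ≠ 0` forces integrability.
  have hint : ∀ᶠ i in atTop, ∀ k ∈ range (M + 1),
      Integrable (fun ω ↦ ((N i ω).descFactorial (n + k) : ℝ)) (P i) :=
    (eventually_all_finset _).2 fun k _ ↦
      eventually_integrable_of_tendsto_integral (pow_ne_zero _ hlam.ne') (hmom _)
  filter_upwards [hint] with i hi
  exact abs_measureReal_eq_sub_sum_integral_descFactorial_le (hN i) n M
    fun k hk ↦ hi k (mem_range.2 (Nat.lt_succ_of_le hk))
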